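/- Let b ∈ ℝ and let V and V′ be two refined volume families, both satisfying the initial conditions and both satisfying the volume recursion at every (g,n,L) with 2g−2+n > 1 and L ∈ (0,∞)^n. Then V = V′, i.e., V_{g,n}(L) = V′_{g,n}(L) for all stable (g,n) and all L ∈ [0,∞)^n. -/

import Mathlib

open scoped BigOperators

noncomputable section

/-- The ramp function `[x]₊ = max x 0`. -/
def ramp (x : ℝ) : ℝ := max x 0

/-- The kernel `𝓡(L₁, L_m, p)`. -/
def kerR (L1 Lm p : ℝ) : ℝ :=
  (1 / (2 * L1)) * (ramp (L1 + Lm - p) - ramp (-L1 + Lm - p) + ramp (L1 - Lm - p))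

/-- The kernel `𝓔(L₁, p)`. -/
def kerE (L1 p : ℝ) : ℝ := (1 / (2 * L1)) * ramp (L1 - p)

/-- The kernel `𝓓(L₁, p, q)`. -/
def kerD (L1 p q : ℝ) : ℝ := (1 / L1) * ramp (L1 - p - q)

/-- The sublist of entries of `L` whose (0-based) index lies in `S`, in order. -/
def selectIdxs {α : Type*} (L : List α) (S : Finset ℕ) : List α :=
  L.zipIdx.filterMap fun p => if p.2 ∈ S then some p.1 else none

/-- The sublist of entries of `L` whose (0-based) index does not lie in `S`, in order. -/
def removeIdxs {α : Type*} (L : List α) (S : Finset ℕ) : List α :=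
  L.zipIdx.filterMap fun p => if p.2 ∈ S then none else some p.1

/-- A refined lattice family is indexed by `h = 2g ∈ ℤ` and a tuple of boundary lengths
(a list); by convention it vanishes when `g < 0` or `2g - 2 + n ≤ 0`. -/
def ZeroConvention (N : ℤ → List ℤ → ℝ) : Prop :=
  ∀ (h : ℤ) (L : List ℤ), h < 0 ∨ h + (L.length : ℤ) ≤ 2 → N h L = 0

/-- The family vanishes on tuples of positive integers with odd sum. -/
def ParitySupported (N : ℤ → List ℤ → ℝ) : Prop :=
  ∀ (h : ℤ) (L : List ℤ), (∀ x ∈ L, 0 < x) → ¬ Even L.sum → N h L = 0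

/-- The initial conditions for `N_{0,3}`, `N_{1/2,2}` and `N_{1,1}` (recall `h = 2g`). -/
def InitialConditions (b : ℝ) (N : ℤ → List ℤ → ℝ) : Prop :=
  (∀ L1 L2 L3 : ℤ, 0 < L1 → 0 < L2 → 0 < L3 →
    N 0 [L1, L2, L3] = (1 + (-1 : ℝ) ^ (L1 + L2 + L3)) / 2 * (1 / 2)) ∧
  (∀ L1 L2 : ℤ, 0 < L1 → 0 < L2 →
    N 1 [L1, L2] = (1 + (-1 : ℝ) ^ (L1 + L2)) / 2 *
      (b * (((max L1 L2 : ℤ) : ℝ) - 1) / 4)) ∧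
  (∀ L1 : ℤ, 0 < L1 →
    N 2 [L1] = (1 + (-1 : ℝ) ^ L1) / 2 *
      (((1 + b) * ((L1 : ℝ) ^ 2 - 4) +
        b ^ 2 * (5 * (L1 : ℝ) ^ 2 - 12 * (L1 : ℝ) + 4)) / 96))

/-- The asymmetric recursion at `(g, n, L)` with `h = 2g`, `L = L₁ :: T`, `n = 1 + T.length`.
All sums over `p, q ∈ ℤ_{>0}` are finite because the kernels vanish for large `p, q`;
they are written here as sums up to the corresponding vanishing threshold. -/
def AsymRecAt (b : ℝ) (N : ℤ → List ℤ → ℝ) (h : ℤ) (L1 : ℤ) (T : List ℤ) : Prop :=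
  N h (L1 :: T) =
    (∑ m ∈ Finset.range T.length, ∑ p ∈ Finset.Icc 1 (L1 + T.getD m 0),
        (p : ℝ) * kerR (L1 : ℝ) ((T.getD m 0 : ℤ) : ℝ) (p : ℝ) * N h (p :: T.eraseIdx m))
    + b * (∑ p ∈ Finset.Icc 1 L1,
        (p : ℝ) * ((L1 : ℝ) - 1) * kerE (L1 : ℝ) (p : ℝ) * N (h - 1) (p :: T))
    + ∑ p ∈ Finset.Icc 1 L1, ∑ q ∈ Finset.Icc 1 L1,
        (p : ℝ) * (q : ℝ) * kerD (L1 : ℝ) (p : ℝ) (q : ℝ) *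
          (((1 + b) / 2) * N (h - 2) (p :: q :: T)
            + ∑ h1 ∈ Finset.Icc 0 h, ∑ S ∈ (Finset.range T.length).powerset,
                N h1 (p :: selectIdxs T S) * N (h - h1) (q :: removeIdxs T S))

/-- The family satisfies the asymmetric recursion at every `(g, n, L)` with
`2g - 2 + n > 1`, `L ∈ (ℤ_{>0})ⁿ` and `L₁ + ⋯ + L_n` even. -/
def AsymRecursion (b : ℝ) (N : ℤ → List ℤ → ℝ) : Prop :=
  ∀ (h : ℤ) (L1 : ℤ) (T : List ℤ), 0 < L1 → (∀ x ∈ T, 0 < x) →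
    3 < h + (1 + (T.length : ℤ)) → Even (L1 + T.sum) → AsymRecAt b N h L1 T

/-- The symmetric recursion at `(g, n, L)` with `h = 2g`. -/
def SymRecAt (b : ℝ) (N : ℤ → List ℤ → ℝ) (h : ℤ) (L : List ℤ) : Prop :=
  2 * (L.sum : ℝ) * N h L =
    (∑ i ∈ Finset.range L.length, ∑ j ∈ (Finset.range L.length).erase i,
        ∑ p ∈ Finset.Icc 1 (L.getD i 0 + L.getD j 0),
          (p : ℝ) * ramp (((L.getD i 0 : ℤ) : ℝ) + ((L.getD j 0 : ℤ) : ℝ) - (p : ℝ)) *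
            N h (p :: removeIdxs L {i, j}))
    + b * (∑ i ∈ Finset.range L.length, ∑ p ∈ Finset.Icc 1 (L.getD i 0),
        (p : ℝ) * (((L.getD i 0 : ℤ) : ℝ) - 1) *
          ramp (((L.getD i 0 : ℤ) : ℝ) - (p : ℝ)) * N (h - 1) (p :: removeIdxs L {i}))
    + ∑ i ∈ Finset.range L.length, ∑ p ∈ Finset.Icc 1 (L.getD i 0),
        ∑ q ∈ Finset.Icc 1 (L.getD i 0),
          (p : ℝ) * (q : ℝ) * ramp (((L.getD i 0 : ℤ) : ℝ) - (p : ℝ) - (q : ℝ)) *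
            ((1 + b) * N (h - 2) (p :: q :: removeIdxs L {i})
              + 2 * ∑ h1 ∈ Finset.Icc 0 h,
                  ∑ S ∈ ((Finset.range L.length).erase i).powerset,
                    N h1 (p :: selectIdxs L S) *
                      N (h - h1) (q :: selectIdxs L (((Finset.range L.length).erase i) \ S)))


open MeasureTheory

/-- A refined volume family is indexed by `h = 2g ∈ ℤ` and a tuple of boundary lengths
(a list of reals); by convention it vanishes when `g < 0` or `2g - 2 + n ≤ 0`. -/
def VolZeroConvention (V : ℤ → List ℝ → ℝ) : Prop :=
  ∀ (h : ℤ) (L : List ℝ), h < 0 ∨ h + (L.length : ℤ) ≤ 2 → V h L = 0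

/-- Each `V_{g,n}` is a continuous function on `[0,∞)ⁿ`. -/
def VolContinuous (V : ℤ → List ℝ → ℝ) : Prop :=
  ∀ (h : ℤ) (n : ℕ),
    ContinuousOn (fun x : Fin n → ℝ => V h (List.ofFn x)) {x | ∀ i, 0 ≤ x i}

/-- The initial conditions for `V_{0,3}`, `V_{1/2,2}` and `V_{1,1}` (recall `h = 2g`). -/
def VolInitialConditions (b : ℝ) (V : ℤ → List ℝ → ℝ) : Prop :=
  (∀ L1 L2 L3 : ℝ, 0 ≤ L1 → 0 ≤ L2 → 0 ≤ L3 → V 0 [L1, L2, L3] = 1 / 2) ∧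
  (∀ L1 L2 : ℝ, 0 ≤ L1 → 0 ≤ L2 → V 1 [L1, L2] = b * max L1 L2 / 4) ∧
  (∀ L1 : ℝ, 0 ≤ L1 → V 2 [L1] = L1 ^ 2 * (1 + b + 5 * b ^ 2) / 96)

/-- The volume recursion at `(g, n, L)` with `h = 2g`, `L = L₁ :: T`, `n = 1 + T.length`.
All integrals are effectively over finite intervals since the kernels vanish for `p`
(respectively `p + q`) large. -/
def VolRecAt (b : ℝ) (V : ℤ → List ℝ → ℝ) (h : ℤ) (L1 : ℝ) (T : List ℝ) : Prop :=
  V h (L1 :: T) =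
    (∑ m ∈ Finset.range T.length, ∫ p in Set.Ioi (0 : ℝ),
        p * kerR L1 (T.getD m 0) p * V h (p :: T.eraseIdx m))
    + b * (∫ p in Set.Ioi (0 : ℝ),
        p * L1 * kerE L1 p * V (h - 1) (p :: T))
    + ∫ p in Set.Ioi (0 : ℝ), ∫ q in Set.Ioi (0 : ℝ),
        p * q * kerD L1 p q *
          (((1 + b) / 2) * V (h - 2) (p :: q :: T)
            + ∑ h1 ∈ Finset.Icc 0 h, ∑ S ∈ (Finset.range T.length).powerset,
                V h1 (p :: selectIdxs T S) * V (h - h1) (q :: removeIdxs T S))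

/-- The family satisfies the volume recursion at every `(g, n, L)` with
`2g - 2 + n > 1` and `L ∈ (0,∞)ⁿ`. -/
def VolRecursion (b : ℝ) (V : ℤ → List ℝ → ℝ) : Prop :=
  ∀ (h : ℤ) (L1 : ℝ) (T : List ℝ), 0 < L1 → (∀ x ∈ T, 0 < x) →
    3 < h + (1 + (T.length : ℤ)) → VolRecAt b V h L1 T


/-! Induct on `h + n = 2g + n`. On `(0,∞)ⁿ` the right-hand side of the recursion for `V_{g,n}`
only involves values of smaller `2g + n`: in a product term the two complexities add up to
`2g + n + 1`, so if one factor is not smaller, the other one is unstable and vanishes. Hence two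
solutions agree on `(0,∞)ⁿ` once they agree below, by continuity also on `[0,∞)ⁿ`, and the
induction starts from the initial conditions at `2g + n = 3`. -/

open Set

theorem mem_of_mem_selectIdxs {α : Type*} {L : List α} {S : Finset ℕ} {a : α}
    (h : a ∈ selectIdxs L S) : a ∈ L := by
  obtain ⟨p, hp, he⟩ := List.mem_filterMap.mp h
  split at he
  · exact Option.some_inj.mp he ▸ List.fst_mem_of_mem_zipIdx hp
  · exact absurd he nofun

theorem mem_of_mem_removeIdxs {α : Type*} {L : List α} {S : Finset ℕ} {a : α}
    (h : a ∈ removeIdxs L S) : a ∈ L := by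
  obtain ⟨p, hp, he⟩ := List.mem_filterMap.mp h
  split at he
  · exact absurd he nofun
  · exact Option.some_inj.mp he ▸ List.fst_mem_of_mem_zipIdx hp

theorem length_selectIdxs_add_length_removeIdxs {α : Type*} (L : List α) (S : Finset ℕ) :
    (selectIdxs L S).length + (removeIdxs L S).length = L.length := by
  rw [selectIdxs, removeIdxs, ← List.length_zipIdx (l := L) (i := 0)]
  induction L.zipIdx with
  | nil => rfl
  | cons a l ih => by_cases h : a.2 ∈ S <;> simp [h] <;> omega

def AgreeBelow (V V' : ℤ → List ℝ → ℝ) (c : ℤ) : Prop :=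
  ∀ (h : ℤ) (L : List ℝ), 0 < L.length → (∀ x ∈ L, 0 ≤ x) → h + (L.length : ℤ) < c →
    V h L = V' h L

section

variable {b : ℝ} {V V' : ℤ → List ℝ → ℝ}

theorem VolContinuous.eq_of_forall_pos (hcont : VolContinuous V) (hcont' : VolContinuous V')
    {h : ℤ} {n : ℕ}
    (hpos : ∀ L : List ℝ, L.length = n → (∀ x ∈ L, 0 < x) → V h L = V' h L)
    {L : List ℝ} (hlen : L.length = n) (hL : ∀ x ∈ L, 0 ≤ x) : V h L = V' h L := by
  subst hlen
  have hnonneg : {x : Fin L.length → ℝ | ∀ i, 0 ≤ x i} = univ.pi fun _ => Ici 0 := by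
    ext; simp only [mem_ofPred_eq, mem_pi, mem_univ, mem_Ici, forall_const]
  have hclosure :
      (univ.pi fun _ => Ici 0) ⊆ closure (univ.pi fun (_ : Fin L.length) => Ioi (0 : ℝ)) := by
    rw [closure_pi_set, closure_Ioi]
  have heq : EqOn (fun x : Fin L.length → ℝ => V h (List.ofFn x)) (fun x => V' h (List.ofFn x))
      (univ.pi fun _ => Ici 0) :=
    EqOn.of_subset_closure (fun x hx => hpos _ List.length_ofFn (by simpa using hx))
      (hnonneg ▸ hcont h _) (hnonneg ▸ hcont' h _) (pi_mono fun _ _ => Ioi_subset_Ici_self)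
      hclosure
  simpa using heq (x := L.get) fun i _ => hL _ (List.get_mem L i)

theorem AgreeBelow.mul_eq_mul (hzero : VolZeroConvention V) (hzero' : VolZeroConvention V')
    {c : ℤ} (hc : AgreeBelow V V' c) {h₁ h₂ : ℤ} {A B : List ℝ}
    (hA : 0 < A.length) (hB : 0 < B.length) (hA₀ : ∀ x ∈ A, 0 ≤ x) (hB₀ : ∀ x ∈ B, 0 ≤ x)
    (hsum : h₁ + (A.length : ℤ) + (h₂ + B.length) ≤ c + 1) :
    V h₁ A * V h₂ B = V' h₁ A * V' h₂ B := by
  by_cases h₁c : h₁ + (A.length : ℤ) < c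
  · by_cases h₂c : h₂ + (B.length : ℤ) < c
    · rw [hc _ _ hA hA₀ h₁c, hc _ _ hB hB₀ h₂c]
    · rw [hzero h₁ A (Or.inr (by omega)), hzero' h₁ A (Or.inr (by omega)), zero_mul, zero_mul]
  · rw [hzero h₂ B (Or.inr (by omega)), hzero' h₂ B (Or.inr (by omega)), mul_zero, mul_zero]

theorem AgreeBelow.eq_of_volRecAt (hzero : VolZeroConvention V)
    (hzero' : VolZeroConvention V') {h : ℤ} {L1 : ℝ} {T : List ℝ}
    (hc : AgreeBelow V V' (h + (L1 :: T).length)) (hT : ∀ x ∈ T, 0 ≤ x)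
    (hV : VolRecAt b V h L1 T) (hV' : VolRecAt b V' h L1 T) :
    V h (L1 :: T) = V' h (L1 :: T) := by
  simp only [List.length_cons, Nat.cast_add, Nat.cast_one] at hc
  rw [hV, hV']
  congr 1
  · congr 1
    · refine Finset.sum_congr rfl fun m hm =>
        setIntegral_congr_fun measurableSet_Ioi fun p hp => ?_
      have hm' := Finset.mem_range.mp hm
      have hlen := List.length_eraseIdx_of_lt hm'
      rw [hc h _ (by simp) (List.forall_mem_cons.2 ⟨le_of_lt hp,
        fun x hx => hT x (List.mem_of_mem_eraseIdx hx)⟩)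
        (by simp only [List.length_cons, hlen]; omega)]
    · refine congrArg _ (setIntegral_congr_fun measurableSet_Ioi fun p hp => ?_)
      rw [hc (h - 1) _ (by simp) (List.forall_mem_cons.2 ⟨le_of_lt hp, hT⟩)
        (by simp only [List.length_cons]; push_cast; omega)]
  · refine setIntegral_congr_fun measurableSet_Ioi fun p hp =>
      setIntegral_congr_fun measurableSet_Ioi fun q hq => ?_
    have hpqT : ∀ x ∈ p :: q :: T, 0 ≤ x :=
      List.forall_mem_cons.2 ⟨le_of_lt hp, List.forall_mem_cons.2 ⟨le_of_lt hq, hT⟩⟩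
    rw [hc (h - 2) _ (by simp) hpqT (by simp only [List.length_cons]; push_cast; omega)]
    refine congrArg _ (congrArg _ (Finset.sum_congr rfl fun h1 _ =>
      Finset.sum_congr rfl fun S _ => ?_))
    have hlen := length_selectIdxs_add_length_removeIdxs T S
    exact hc.mul_eq_mul hzero hzero' (by simp) (by simp)
      (List.forall_mem_cons.2 ⟨le_of_lt hp, fun x hx => hT x (mem_of_mem_selectIdxs hx)⟩)
      (List.forall_mem_cons.2 ⟨le_of_lt hq, fun x hx => hT x (mem_of_mem_removeIdxs hx)⟩)
      (by simp only [List.length_cons]; push_cast; omega)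

theorem VolInitialConditions.eq (hinit : VolInitialConditions b V)
    (hinit' : VolInitialConditions b V') {h : ℤ} {L : List ℝ} (hh : 0 ≤ h)
    (hc : h + (L.length : ℤ) = 3) (hlen : 0 < L.length) (hL : ∀ x ∈ L, 0 ≤ x) : V h L = V' h L := by
  obtain ⟨rfl, hn⟩ | ⟨rfl, hn⟩ | ⟨rfl, hn⟩ :
      (h = 0 ∧ L.length = 3) ∨ (h = 1 ∧ L.length = 2) ∨ (h = 2 ∧ L.length = 1) := by omega
  · obtain ⟨x, y, z, rfl⟩ := List.length_eq_three.mp hn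
    rw [hinit.1 x y z (hL x (by simp)) (hL y (by simp)) (hL z (by simp)),
      hinit'.1 x y z (hL x (by simp)) (hL y (by simp)) (hL z (by simp))]
  · obtain ⟨x, y, rfl⟩ := List.length_eq_two.mp hn
    rw [hinit.2.1 x y (hL x (by simp)) (hL y (by simp)),
      hinit'.2.1 x y (hL x (by simp)) (hL y (by simp))]
  · obtain ⟨x, rfl⟩ := List.length_eq_one_iff.mp hn
    rw [hinit.2.2 x (hL x (by simp)), hinit'.2.2 x (hL x (by simp))]

theorem VolRecursion.eq_of_agreeBelow (hzero : VolZeroConvention V)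
    (hzero' : VolZeroConvention V') (hcont : VolContinuous V) (hcont' : VolContinuous V')
    (hrec : VolRecursion b V) (hrec' : VolRecursion b V') {h : ℤ} {L : List ℝ}
    (hc : AgreeBelow V V' (h + L.length)) (hstable : 3 < h + (L.length : ℤ))
    (hlen : 0 < L.length) (hL : ∀ x ∈ L, 0 ≤ x) : V h L = V' h L := by
  refine hcont.eq_of_forall_pos hcont' (fun M hM hMpos => ?_) rfl hL
  obtain ⟨M1, T, rfl⟩ := List.exists_cons_of_length_pos (hM ▸ hlen)
  have hM1 : 0 < M1 := hMpos M1 List.mem_cons_self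
  have hT : ∀ x ∈ T, 0 < x := fun x hx => hMpos x (List.mem_cons_of_mem _ hx)
  rw [← hM] at hc hstable
  simp only [List.length_cons, Nat.cast_add, Nat.cast_one] at hstable
  exact hc.eq_of_volRecAt hzero hzero' (fun x hx => (hT x hx).le)
    (hrec h M1 T hM1 hT (by omega)) (hrec' h M1 T hM1 hT (by omega))

theorem AgreeBelow.succ (hzero : VolZeroConvention V) (hzero' : VolZeroConvention V')
    (hcont : VolContinuous V) (hcont' : VolContinuous V')
    (hinit : VolInitialConditions b V) (hinit' : VolInitialConditions b V')
    (hrec : VolRecursion b V) (hrec' : VolRecursion b V') {c : ℤ} (hc : AgreeBelow V V' c) :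
    AgreeBelow V V' (c + 1) := by
  intro h L hlen hL hlt
  obtain hlt | rfl := lt_or_eq_of_le (Int.lt_add_one_iff.mp hlt)
  · exact hc h L hlen hL hlt
  by_cases hunstable : h < 0 ∨ h + (L.length : ℤ) ≤ 2
  · rw [hzero h L hunstable, hzero' h L hunstable]
  push Not at hunstable
  obtain h3 | hstable := eq_or_lt_of_le (show 3 ≤ h + (L.length : ℤ) by omega)
  · exact hinit.eq hinit' hunstable.1 h3.symm hlen hL
  · exact hrec.eq_of_agreeBelow hzero hzero' hcont hcont' hrec' hc hstable hlen hL

theorem agreeBelow_natCast (hzero : VolZeroConvention V) (hzero' : VolZeroConvention V')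
    (hcont : VolContinuous V) (hcont' : VolContinuous V')
    (hinit : VolInitialConditions b V) (hinit' : VolInitialConditions b V')
    (hrec : VolRecursion b V) (hrec' : VolRecursion b V') (k : ℕ) :
    AgreeBelow V V' k := by
  induction k with
  | zero =>
    intro h L _ _ hneg
    rw [hzero h L (Or.inr (by omega)), hzero' h L (Or.inr (by omega))]
  | succ k ih =>
    push_cast
    exact ih.succ hzero hzero' hcont hcont' hinit hinit' hrec hrec'

end

/-- Two refined volume families satisfying the initial conditions and
the volume recursion agree on all stable `(g,n)` and all of `[0,∞)ⁿ`. -/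
theorem volRec_unique (b : ℝ) (V V' : ℤ → List ℝ → ℝ)
    (hzero : VolZeroConvention V) (hzero' : VolZeroConvention V')
    (hcont : VolContinuous V) (hcont' : VolContinuous V')
    (hinit : VolInitialConditions b V) (hinit' : VolInitialConditions b V')
    (hrec : VolRecursion b V) (hrec' : VolRecursion b V') :
    ∀ (h : ℤ) (L : List ℝ), (∀ x ∈ L, 0 ≤ x) → 0 < L.length →
      2 < h + (L.length : ℤ) → V h L = V' h L := by
  intro h L hL hlen _
  exact agreeBelow_natCast hzero hzero' hcont hcont' hinit hinit' hrec hrec'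
    (h + L.length + 1).toNat h L hlen hL (by have := Int.self_le_toNat (h + L.length + 1); omega)

end
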